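/- arXiv:math/0507376 — 6 statements merged into one kernel-verified Lean document; each statement's English description precedes it below -/
import Mathlib

section
/- Let σ and η be permutations of the set {1,2,3}×{1,2,3} and let A_σ, A_η be their associated 3×3 transition matrices. Then A_σ and A_η are permutation-conjugate if and only if Tr(A_σ) = Tr(A_η) and Tr(A_σ² + A_σ) = Tr(A_η² + A_η). -/
/-- The permutation matrix of a permutation `σ` (entries in `ℕ`). -/
def permMat {n : Type*} [DecidableEq n] (σ : Equiv.Perm n) : Matrix n n ℕ :=
  fun i j => if σ j = i then 1 else 0

/-- Two square ℕ-valued matrices are permutation-conjugate if `T * A * T⁻¹ = B`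
for some permutation matrix `T`, equivalently `T * A = B * T`. -/
def PermConj {n : Type*} [Fintype n] [DecidableEq n] (A B : Matrix n n ℕ) : Prop :=
  ∃ σ : Equiv.Perm n, permMat σ * A = B * permMat σ

/-- The transition matrix of a permutation of `{1,2,3} × {1,2,3}`:
`(A_σ)_{j,k} = #{(n,m) : σ(n,k) = (j,m)}`. -/
def Amat (σ : Equiv.Perm (Fin 3 × Fin 3)) : Matrix (Fin 3) (Fin 3) ℕ :=
  fun j k => (Finset.univ.filter (fun nm : Fin 3 × Fin 3 => σ (nm.1, k) = (j, nm.2))).card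

/-!
Conjugating by a permutation matrix permutes rows and columns simultaneously, which preserves
`tr A` and `tr A²`. Conversely, every row and every column of `A_σ` sums to `3`, so `A_σ` is a
semimagic square, determined by its upper left `2 × 2` block. There are only 55 semimagic
`3 × 3` squares with line sum `3`; they fall into 16 classes under simultaneous permutation,
and a finite check shows that `tr A` and `tr A²` separate these classes.
-/

open Matrix Equiv

section PermConj

variable {n : Type*}

lemma permMat_eq_toMatrix_toPEquiv [DecidableEq n] (σ : Perm n) :
    permMat σ = σ.symm.toPEquiv.toMatrix := by
  ext i j
  simp [permMat, PEquiv.toMatrix_apply, eq_comm, eq_symm_apply]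

lemma permConj_iff_exists_submatrix_eq [Fintype n] [DecidableEq n] {A B : Matrix n n ℕ} :
    PermConj A B ↔ ∃ σ : Perm n, B.submatrix σ σ = A := by
  simp only [PermConj, permMat_eq_toMatrix_toPEquiv, PEquiv.toMatrix_toPEquiv_mul,
    PEquiv.mul_toMatrix_toPEquiv, symm_symm]
  refine exists_congr fun σ => ⟨fun h => ?_, fun h => ?_⟩
  · ext i j
    simpa using (congrFun (congrFun h (σ i)) j).symm
  · ext i j
    simp [← h]

variable [Fintype n] {R : Type*}

lemma trace_submatrix_equiv [AddCommMonoid R] (A : Matrix n n R) (σ : Perm n) :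
    (A.submatrix σ σ).trace = A.trace :=
  Equiv.sum_comp σ fun i => A i i

lemma submatrix_equiv_sq [DecidableEq n] [Semiring R] (A : Matrix n n R) (σ : Perm n) :
    A.submatrix σ σ ^ 2 = (A ^ 2).submatrix σ σ := by
  rw [sq, sq, submatrix_mul_equiv]

end PermConj

section Semimagic

variable {n : Type*} [Fintype n]

def IsSemimagic (s : ℕ) (A : Matrix n n ℕ) : Prop :=
  (∀ i, ∑ j, A i j = s) ∧ ∀ j, ∑ i, A i j = s

instance (s : ℕ) (A : Matrix n n ℕ) : Decidable (IsSemimagic s A) :=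
  inferInstanceAs (Decidable (_ ∧ _))

lemma IsSemimagic.apply_le {s : ℕ} {A : Matrix n n ℕ} (h : IsSemimagic s A) (i j : n) :
    A i j ≤ s :=
  h.1 i ▸ Finset.single_le_sum (fun _ _ => Nat.zero_le _) (Finset.mem_univ j)

/-- `ℕ`-subtraction truncates: this is semimagic only when `a + b`, `c + d`, `a + c`, `b + d`
are at most `3` and `a + b + c + d` is at least `3`. -/
def semimagic3 (a b c d : ℕ) : Matrix (Fin 3) (Fin 3) ℕ :=
  !![a, b, 3 - a - b; c, d, 3 - c - d; 3 - a - c, 3 - b - d, a + b + c + d - 3]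

lemma IsSemimagic.eq_semimagic3 {A : Matrix (Fin 3) (Fin 3) ℕ} (h : IsSemimagic 3 A) :
    A = semimagic3 (A 0 0) (A 0 1) (A 1 0) (A 1 1) := by
  obtain ⟨hrow, hcol⟩ := h
  have := hrow 0; have := hrow 1; have := hrow 2
  have := hcol 0; have := hcol 1; have := hcol 2
  simp only [Fin.sum_univ_three] at *
  ext i j
  fin_cases i <;> fin_cases j <;> simp [semimagic3] <;> omega

-- The `Decidable` instance for eight nested bounded quantifiers exceeds the default size.
set_option synthInstance.maxSize 100000 in
set_option maxHeartbeats 4000000 in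
lemma semimagic3_classification :
    ∀ a ≤ 3, ∀ b ≤ 3, ∀ c ≤ 3, ∀ d ≤ 3, IsSemimagic 3 (semimagic3 a b c d) →
    ∀ a' ≤ 3, ∀ b' ≤ 3, ∀ c' ≤ 3, ∀ d' ≤ 3, IsSemimagic 3 (semimagic3 a' b' c' d') →
    (semimagic3 a b c d).trace = (semimagic3 a' b' c' d').trace →
    (semimagic3 a b c d ^ 2).trace = (semimagic3 a' b' c' d' ^ 2).trace →
    ∃ σ : Perm (Fin 3), (semimagic3 a' b' c' d').submatrix σ σ = semimagic3 a b c d := by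
  decide

lemma IsSemimagic.exists_submatrix_eq_of_trace_eq {A B : Matrix (Fin 3) (Fin 3) ℕ}
    (hA : IsSemimagic 3 A) (hB : IsSemimagic 3 B) (h1 : A.trace = B.trace)
    (h2 : (A ^ 2).trace = (B ^ 2).trace) : ∃ σ : Perm (Fin 3), B.submatrix σ σ = A := by
  have eA := hA.eq_semimagic3
  have eB := hB.eq_semimagic3
  rw [eA, eB] at h1 h2 ⊢
  rw [eA] at hA
  rw [eB] at hB
  exact semimagic3_classification _ (hA.apply_le 0 0) _ (hA.apply_le 0 1) _ (hA.apply_le 1 0)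
    _ (hA.apply_le 1 1) hA _ (hB.apply_le 0 0) _ (hB.apply_le 0 1) _ (hB.apply_le 1 0)
    _ (hB.apply_le 1 1) hB h1 h2

end Semimagic

lemma Amat_eq_sum (σ : Perm (Fin 3 × Fin 3)) (j k : Fin 3) :
    Amat σ j k = ∑ n, ∑ m, if σ (n, k) = (j, m) then 1 else 0 := by
  rw [Amat, Finset.card_filter, Fintype.sum_prod_type]

lemma isSemimagic_Amat (σ : Perm (Fin 3 × Fin 3)) : IsSemimagic 3 (Amat σ) := by
  simp only [IsSemimagic, Amat_eq_sum]
  refine ⟨fun j => ?_, fun k => ?_⟩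
  · rw [Finset.sum_comm, ← Fintype.sum_prod_type', Finset.sum_comm]
    simp [← eq_symm_apply]
  · have h : ∀ n, ∑ j, ∑ m, (if σ (n, k) = (j, m) then 1 else 0) = 1 := fun n => by
      rw [← Fintype.sum_prod_type']
      simp
    rw [Finset.sum_comm]
    simp only [h, Finset.sum_const, Finset.card_univ, Fintype.card_fin, smul_eq_mul, mul_one]

/-- `A_σ` and `A_η` are permutation-conjugate iff
`Tr A_σ = Tr A_η` and `Tr(A_σ² + A_σ) = Tr(A_η² + A_η)`. -/
theorem permConj_iff_traces (σ η : Equiv.Perm (Fin 3 × Fin 3)) :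
    PermConj (Amat σ) (Amat η) ↔
      (Matrix.trace (Amat σ) = Matrix.trace (Amat η) ∧
        Matrix.trace ((Amat σ) ^ 2 + Amat σ) = Matrix.trace ((Amat η) ^ 2 + Amat η)) := by
  rw [permConj_iff_exists_submatrix_eq, trace_add, trace_add]
  constructor
  · rintro ⟨τ, h⟩
    rw [← h, submatrix_equiv_sq, trace_submatrix_equiv, trace_submatrix_equiv]
    exact ⟨rfl, rfl⟩
  · rintro ⟨h1, h2⟩
    exact (isSemimagic_Amat σ).exists_submatrix_eq_of_trace_eq (isSemimagic_Amat η) h1 (by omega)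
end

section
/- The set {A_σ : σ a permutation of {1,2,3}×{1,2,3}} of 3×3 transition matrices, considered up to permutation-conjugacy, has exactly 16 equivalence classes. -/
/-!
Every column of `A_σ` sums to 3, and so does every row because `σ` is a bijection. Conversely,
for permutations `π₀, π₁, π₂` of `{1,2,3}` the permutation `σ(n,k) = (πₙ k, n)` has
`A_σ = ∑ₙ P(πₙ)`, `P` denoting permutation matrices. Permutation-conjugacy relabels rows and
columns simultaneously, so the classes are orbits of `S₃` on the 55 matrices with all line sums 3:
there are 16 of them, each containing a sum of three permutation matrices.
-/

open Finset

section PermConj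

variable {n : Type*} [DecidableEq n]

theorem permMat_eq_toMatrix (σ : Equiv.Perm n) : permMat σ = σ.symm.toPEquiv.toMatrix := by
  ext i j
  simp only [permMat, PEquiv.toMatrix_apply, Equiv.toPEquiv_apply, Option.mem_def,
    Option.some.injEq]
  exact if_congr (eq_comm.trans σ.symm_apply_eq.symm) rfl rfl

variable [Fintype n]

theorem permConj_iff_exists_submatrix {A B : Matrix n n ℕ} :
    PermConj A B ↔ ∃ τ : Equiv.Perm n, A.submatrix τ τ = B := by
  simp only [PermConj, permMat_eq_toMatrix, PEquiv.toMatrix_toPEquiv_mul,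
    PEquiv.mul_toMatrix_toPEquiv, Equiv.symm_symm]
  constructor
  · rintro ⟨σ, h⟩
    refine ⟨σ.symm, Matrix.ext fun i j => ?_⟩
    simpa using congrFun (congrFun h i) (σ.symm j)
  · rintro ⟨τ, rfl⟩
    exact ⟨τ.symm, by ext; simp⟩

instance (A B : Matrix n n ℕ) : Decidable (PermConj A B) :=
  decidable_of_iff _ permConj_iff_exists_submatrix.symm

theorem permConj_equivalence : Equivalence (PermConj (n := n)) where
  refl A := permConj_iff_exists_submatrix.2 ⟨1, Matrix.submatrix_id_id A⟩
  symm h := by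
    obtain ⟨τ, rfl⟩ := permConj_iff_exists_submatrix.1 h
    exact permConj_iff_exists_submatrix.2 ⟨τ⁻¹, by ext; simp⟩
  trans h h' := by
    obtain ⟨τ, rfl⟩ := permConj_iff_exists_submatrix.1 h
    obtain ⟨τ', rfl⟩ := permConj_iff_exists_submatrix.1 h'
    exact permConj_iff_exists_submatrix.2 ⟨τ * τ', rfl⟩

end PermConj

theorem card_quot_eq_of_transversal {α ι : Type*} {r : α → α → Prop} (hr : Equivalence r)
    (f : ι → α) (hf : ∀ i j, r (f i) (f j) → i = j) (hcover : ∀ a, ∃ i, r (f i) a) :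
    Nat.card (Quot r) = Nat.card ι :=
  Nat.card_congr (Equiv.ofBijective (fun i => Quot.mk r (f i))
    ⟨fun i j h => hf i j (hr.eqvGen_iff.1 (Quot.eqvGen_exact h)),
      by rintro ⟨a⟩; exact (hcover a).imp fun _ => Quot.sound⟩).symm

theorem Amat_apply_eq_card (σ : Equiv.Perm (Fin 3 × Fin 3)) (j k : Fin 3) :
    Amat σ j k = #{x | (σ x).1 = j ∧ x.2 = k} := by
  refine card_nbij' (fun nm => (nm.1, k)) (fun x => (x.1, (σ x).2)) ?_ ?_ ?_ ?_ <;>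
    intro x hx <;> simp only [coe_filter, Set.mem_ofPred_eq, mem_univ, true_and] at hx ⊢
  · simp [hx]
  · obtain ⟨h1, rfl⟩ := hx
    rw [← h1]
  · rw [hx]
  · obtain ⟨h1, rfl⟩ := hx
    rfl

theorem sum_Amat_col (σ : Equiv.Perm (Fin 3 × Fin 3)) (k : Fin 3) : ∑ j, Amat σ j k = 3 := by
  simp_rw [Amat_apply_eq_card]
  calc ∑ j, #{x | (σ x).1 = j ∧ x.2 = k} = #{x : Fin 3 × Fin 3 | x.2 = k} := by
        rw [card_eq_sum_card_fiberwise (f := fun x => (σ x).1) (t := univ) (by simp)]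
        simp [filter_filter, and_comm]
    _ = 3 := by revert k; decide

theorem sum_Amat_row (σ : Equiv.Perm (Fin 3 × Fin 3)) (j : Fin 3) : ∑ k, Amat σ j k = 3 := by
  simp_rw [Amat_apply_eq_card]
  calc ∑ k, #{x | (σ x).1 = j ∧ x.2 = k} = #{x | (σ x).1 = j} := by
        rw [card_eq_sum_card_fiberwise (f := fun x => x.2) (t := univ) (by simp)]
        simp [filter_filter]
    _ = #{y : Fin 3 × Fin 3 | y.1 = j} := card_equiv σ (by simp)
    _ = 3 := by revert j; decide

/-- `shearPerm π (n, k) = (π n k, n)`. -/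
def shearPerm (π : Fin 3 → Equiv.Perm (Fin 3)) : Equiv.Perm (Fin 3 × Fin 3) :=
  (Equiv.prodShear (Equiv.refl _) π).trans (Equiv.prodComm _ _)

theorem Amat_shearPerm (π : Fin 3 → Equiv.Perm (Fin 3)) :
    Amat (shearPerm π) = ∑ n, permMat (π n) := by
  ext j k
  simp only [Amat_apply_eq_card, Matrix.sum_apply, permMat, sum_boole, shearPerm,
    Equiv.trans_apply, Equiv.prodShear_apply, Equiv.refl_apply, Equiv.prodComm_apply,
    Prod.fst_swap]
  refine card_nbij' Prod.fst (fun n => (n, k)) ?_ ?_ ?_ ?_ <;>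
    intro x hx <;> simp only [coe_filter, Set.mem_ofPred_eq, mem_univ, true_and, and_true] at hx ⊢
  · rw [← hx.2, hx.1]
  · exact hx
  · rw [← hx.2]

def classMat : Fin 16 → Matrix (Fin 3) (Fin 3) ℕ :=
  ![!![0, 0, 3; 0, 3, 0; 3, 0, 0], !![0, 0, 3; 1, 2, 0; 2, 1, 0], !![0, 0, 3; 2, 1, 0; 1, 2, 0],
    !![0, 0, 3; 3, 0, 0; 0, 3, 0], !![0, 1, 2; 1, 1, 1; 2, 1, 0], !![0, 1, 2; 1, 2, 0; 2, 0, 1],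
    !![0, 1, 2; 2, 0, 1; 1, 2, 0], !![0, 1, 2; 2, 1, 0; 1, 1, 1], !![1, 0, 2; 0, 3, 0; 2, 0, 1],
    !![1, 0, 2; 1, 2, 0; 1, 1, 1], !![1, 0, 2; 2, 1, 0; 0, 2, 1], !![1, 1, 1; 1, 1, 1; 1, 1, 1],
    !![1, 1, 1; 1, 2, 0; 1, 0, 2], !![2, 0, 1; 0, 3, 0; 1, 0, 2], !![2, 0, 1; 1, 2, 0; 0, 1, 2],
    !![3, 0, 0; 0, 3, 0; 0, 0, 3]]

theorem classMat_eq_sum_permMat :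
    ∀ i, ∃ π : Fin 3 → Equiv.Perm (Fin 3), classMat i = ∑ n, permMat (π n) := by
  decide +kernel

theorem exists_Amat_eq_classMat (i : Fin 16) : ∃ σ, Amat σ = classMat i := by
  obtain ⟨π, hπ⟩ := classMat_eq_sum_permMat i
  exact ⟨shearPerm π, (Amat_shearPerm π).trans hπ.symm⟩

theorem eq_of_permConj_classMat : ∀ i j, PermConj (classMat i) (classMat j) → i = j := by
  decide +kernel

theorem exists_permConj_classMat {A : Matrix (Fin 3) (Fin 3) ℕ}
    (hrow : ∀ i, ∑ j, A i j = 3) (hcol : ∀ j, ∑ i, A i j = 3) :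
    ∃ r, PermConj (classMat r) A := by
  -- a search over the 10³ matrices whose rows sum to 3
  have hsearch : ∀ A ∈ Fintype.piFinset fun _ : Fin 3 => Nat.antidiagonalTuple 3 3,
      (∀ j, ∑ i, A i j = 3) → ∃ r, PermConj (classMat r) (Matrix.of A) := by
    decide +kernel
  exact hsearch A (Fintype.mem_piFinset.2 fun i => Nat.mem_antidiagonalTuple.2 (hrow i)) hcol

/-- the set `{A_σ : σ ∈ 𝔖_{3,2}}` has exactly 16 classes up to
permutation-conjugacy. -/
theorem card_classes_Amat :
    Nat.card (Quot (fun A B : {A : Matrix (Fin 3) (Fin 3) ℕ //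
      ∃ σ : Equiv.Perm (Fin 3 × Fin 3), Amat σ = A} => PermConj A.1 B.1)) = 16 := by
  rw [card_quot_eq_of_transversal (permConj_equivalence.comap Subtype.val)
    (fun i => ⟨classMat i, exists_Amat_eq_classMat i⟩) eq_of_permConj_classMat, Nat.card_fin]
  rintro ⟨_, σ, rfl⟩
  exact exists_permConj_classMat (sum_Amat_row σ) (sum_Amat_col σ)
end

section
/- Let N ≥ 2 and l ≥ 2 be integers. For every matrix A indexed by {1,…,N}^{l-1} × {1,…,N}^{l-1} with natural-number entries all of whose row sums and column sums equal N, there exists a permutation σ of {1,…,N}^l such that A_σ = A. (That is, every directed regular graph with N^{l-1} vertices, N outgoing and N incoming edges at each vertex arises as the Mealy diagram of some permutation in 𝔖_{N,l}.) -/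
/-- The transition matrix of a permutation `σ` of words of length `m+1` over the
alphabet `Fin N` (so `l = m + 1 ≥ 2`), indexed by words of length `m`. -/
def AmatGen {N m : ℕ} (σ : Equiv.Perm (Fin (m + 1) → Fin N)) :
    Matrix (Fin m → Fin N) (Fin m → Fin N) ℕ :=
  fun J K => (Finset.univ.filter
    (fun nm : Fin N × Fin N => σ (Fin.cons nm.1 K) = Fin.snoc J nm.2)).card

/-!
A bijection `e : α × S ≃ S × α` is a Mealy machine with states `S` and alphabet `α`: an edge
`K → J` for each pair of letters `(n, m)` with `e (n, K) = (J, m)`. Given `A`, take `A J K`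
edges from `K` to `J`. As column and row sums equal `|α|`, the edges entering each state `K` can
be labelled bijectively by input letters and the edges leaving each state `J` by output letters;
sending `(n, K)` along the edge with input label `n` at `K` to its target and its output label
realises `A`. On words, `σ` is this machine conjugated by `Fin.cons` and `Fin.snoc`.
-/

open Finset

def Equiv.sigmaComm {α β : Type*} (γ : α → β → Type*) : (Σ a b, γ a b) ≃ Σ b a, γ a b :=
  ⟨fun x => ⟨x.2.1, x.1, x.2.2⟩, fun x => ⟨x.2.1, x.1, x.2.2⟩, fun _ => rfl, fun _ => rfl⟩

theorem Finset.card_filter_apply_eq_pair {α β S : Type*} [Fintype α] [Fintype β]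
    [DecidableEq β] [DecidableEq S] (h : α → S × β) (J : S) :
    #{p : α × β | h p.1 = (J, p.2)} = #{a | (h a).1 = J} := by
  refine (card_nbij' (fun a => (a, (h a).2)) Prod.fst ?_ ?_ (fun _ _ => rfl) ?_).symm <;>
    simp +contextual [Set.MapsTo, Set.LeftInvOn, Prod.ext_iff]

theorem Finset.card_filter_sigma_fst_eq {α ι : Type*} {β : ι → Type*} [Fintype α]
    [DecidableEq ι] [∀ i, Fintype (β i)] (f : α ≃ Σ i, β i) (i : ι) :
    #{a | (f a).1 = i} = Fintype.card (β i) := by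
  rw [← Fintype.card_subtype]
  exact Fintype.card_congr ((f.subtypeEquiv fun _ => Iff.rfl).trans (Equiv.sigmaSubtype i))

section MealyMachine

variable {α S : Type*} [Fintype α] [DecidableEq α] [Fintype S] [DecidableEq S]

def transitionCount (e : α × S → S × α) : Matrix S S ℕ :=
  fun J K => #{p : α × α | e (p.1, K) = (J, p.2)}

theorem exists_equiv_transitionCount_eq (A : Matrix S S ℕ)
    (hcol : ∀ K, ∑ J, A J K = Fintype.card α) (hrow : ∀ J, ∑ K, A J K = Fintype.card α) :
    ∃ e : α × S ≃ S × α, transitionCount e = A := by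
  have inc K : α ≃ Σ J, Fin (A J K) := Fintype.equivOfCardEq (by simp [hcol])
  have out J : (Σ K, Fin (A J K)) ≃ α := Fintype.equivOfCardEq (by simp [hrow])
  let e : α × S ≃ S × α :=
    (Equiv.prodComm α S).trans <| (Equiv.sigmaEquivProd S α).symm.trans <|
      (Equiv.sigmaCongrRight inc).trans <| (Equiv.sigmaComm fun K J => Fin (A J K)).trans <|
        (Equiv.sigmaCongrRight out).trans (Equiv.sigmaEquivProd S α)
  refine ⟨e, Matrix.ext fun J K => ?_⟩
  calc transitionCount e J K = #{n | (e (n, K)).1 = J} :=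
        card_filter_apply_eq_pair (fun n => e (n, K)) J
    _ = #{n | (inc K n).1 = J} := rfl
    _ = A J K := by rw [card_filter_sigma_fst_eq, Fintype.card_fin]

end MealyMachine

section Words

variable {N m : ℕ}

def wordPerm (e : Fin N × (Fin m → Fin N) ≃ (Fin m → Fin N) × Fin N) :
    Equiv.Perm (Fin (m + 1) → Fin N) :=
  (Fin.consEquiv fun _ => Fin N).symm.trans
    (e.trans ((Equiv.prodComm _ _).trans (Fin.snocEquiv fun _ => Fin N)))

theorem wordPerm_cons (e : Fin N × (Fin m → Fin N) ≃ (Fin m → Fin N) × Fin N) (n : Fin N)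
    (K : Fin m → Fin N) : wordPerm e (Fin.cons n K) = Fin.snoc (e (n, K)).1 (e (n, K)).2 := by
  simp [wordPerm, Fin.consEquiv, Fin.snocEquiv]

theorem AmatGen_wordPerm (e : Fin N × (Fin m → Fin N) ≃ (Fin m → Fin N) × Fin N) :
    AmatGen (wordPerm e) = transitionCount e := by
  ext J K
  simp only [AmatGen, transitionCount, wordPerm_cons, Fin.snoc_inj, Prod.ext_iff]

end Words

theorem AmatGen_surjective_general {N m : ℕ}
    (A : Matrix (Fin m → Fin N) (Fin m → Fin N) ℕ)
    (hA : ∀ K : Fin m → Fin N,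
      (∑ J : Fin m → Fin N, A J K = N) ∧ (∑ J : Fin m → Fin N, A K J = N)) :
    ∃ σ : Equiv.Perm (Fin (m + 1) → Fin N), AmatGen σ = A := by
  obtain ⟨e, he⟩ := exists_equiv_transitionCount_eq (α := Fin N) A
    (fun K => by rw [(hA K).1, Fintype.card_fin]) (fun J => by rw [(hA J).2, Fintype.card_fin])
  exact ⟨wordPerm e, by rw [AmatGen_wordPerm, he]⟩

/-- for `N ≥ 2`, `l = m + 1 ≥ 2`, every `N^m × N^m` ℕ-matrix whose
row and column sums all equal `N` arises as the transition matrix `A_σ` of some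
permutation `σ` of `{1,…,N}^l`. -/
theorem AmatGen_surjective {N m : ℕ} (hN : 2 ≤ N) (hm : 1 ≤ m)
    (A : Matrix (Fin m → Fin N) (Fin m → Fin N) ℕ)
    (hA : ∀ K : Fin m → Fin N,
      (∑ J : Fin m → Fin N, A J K = N) ∧ (∑ J : Fin m → Fin N, A K J = N)) :
    ∃ σ : Equiv.Perm (Fin (m + 1) → Fin N), AmatGen σ = A :=
  AmatGen_surjective_general A hA
end

section
/- Let g be a finite directed multigraph with adjacency matrix A. The number of 3-cycles of g, i.e., the number of orbits of the rotation action of ℤ/3ℤ on the set of closed walks of length 3 in g, equals (1/3)·Tr(A³ + 2A); that is, 3·c₃(g) = Tr(A³) + 2·Tr(A). -/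
/-- Adjacency matrix of the finite directed multigraph with edge set `E`,
vertex set `V` and source/target maps `s t : E → V`:
`A_{ij} = #{e : s e = i ∧ t e = j}`. -/
def adjMat {V E : Type*} [Fintype E] [DecidableEq V] (s t : E → V) : Matrix V V ℕ :=
  fun i j => (Finset.univ.filter (fun e => s e = i ∧ t e = j)).card

/-- A closed walk of length `k`: a function `e : ZMod k → E` with
`t (e i) = s (e (i+1))` for all `i`. -/
def IsClosedWalk {V E : Type*} (s t : E → V) (k : ℕ) (e : ZMod k → E) : Prop :=
  ∀ i, t (e i) = s (e (i + 1))

/-- The rotation relation on closed walks of length `k`: `w₁ ~ w₂` iff `w₂` is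
obtained from `w₁` by rotating indices by some `r : ZMod k`. -/
def RotRel {V E : Type*} (s t : E → V) (k : ℕ)
    (w₁ w₂ : {e : ZMod k → E // IsClosedWalk s t k e}) : Prop :=
  ∃ r : ZMod k, ∀ i, w₁.1 (i + r) = w₂.1 i

/-- `cyc s t k` is the number of `k`-cycles of the graph: the number of orbits
of the rotation action of `ZMod k` on closed walks of length `k`. -/
noncomputable def cyc {V E : Type*} (s t : E → V) (k : ℕ) : ℕ :=
  Nat.card (Quot (RotRel s t k))

/-! Burnside's lemma for the rotation action of `ZMod p`, `p` prime, on closed walks of length `p`: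
the zero rotation fixes every closed walk, and a nonzero rotation generates `ZMod p`, so it fixes
exactly the constant walks, i.e. the loops, of which there are `Tr A`. For `p = 3` the closed walks
are the triples of edges `(a, b, c)` with `t a = s b`, `t b = s c`, `t c = s a`, counted by
`Tr (A ^ 3) = ∑ i j k, A i j * A j k * A k i` after grouping them by their three vertices. -/

open Finset

theorem Matrix.trace_pow_three {V R : Type*} [Fintype V] [DecidableEq V] [CommSemiring R]
    (M : Matrix V V R) :
    (M ^ 3).trace = ∑ i, ∑ j, ∑ k, M i j * M j k * M k i := by
  simp only [Matrix.trace, Matrix.diag, pow_three, Matrix.mul_apply, mul_sum, mul_assoc]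

section

variable {V E : Type*} (s t : E → V)

abbrev ClosedWalk (k : ℕ) := {e : ZMod k → E // IsClosedWalk s t k e}

namespace ClosedWalk

variable {s t} {k : ℕ}

instance : AddAction (ZMod k) (ClosedWalk s t k) where
  vadd r w := ⟨fun i => w.1 (i + r), fun i => by simpa only [add_right_comm] using w.2 (i + r)⟩
  zero_vadd w := Subtype.ext <| funext fun i => congrArg w.1 (add_zero i)
  add_vadd a b w := Subtype.ext <| funext fun i => congrArg w.1 (add_assoc i a b).symm

theorem vadd_apply (r : ZMod k) (w : ClosedWalk s t k) (i : ZMod k) :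
    (r +ᵥ w).1 i = w.1 (i + r) := rfl

theorem rotRel_iff_orbitRel (w₁ w₂ : ClosedWalk s t k) :
    RotRel s t k w₁ w₂ ↔ AddAction.orbitRel (ZMod k) (ClosedWalk s t k) w₁ w₂ := by
  rw [AddAction.orbitRel_apply, AddAction.mem_orbit_iff]
  constructor
  · rintro ⟨r, h⟩
    exact ⟨-r, Subtype.ext <| funext fun i => by rw [vadd_apply, ← h, neg_add_cancel_right]⟩
  · rintro ⟨r, rfl⟩
    exact ⟨-r, fun i => by rw [vadd_apply, neg_add_cancel_right]⟩

theorem apply_eq_apply_zero_of_vadd_eq_self {p : ℕ} [Fact p.Prime] {r : ZMod p} (hr : r ≠ 0)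
    {w : ClosedWalk s t p} (hw : r +ᵥ w = w) (i : ZMod p) : w.1 i = w.1 0 := by
  have hr_mem : r ∈ AddAction.stabilizer (ZMod p) w := hw
  have hi_mem : i ∈ AddAction.stabilizer (ZMod p) w := by
    have := AddSubgroup.nsmul_mem _ hr_mem (i * r⁻¹).val
    rwa [nsmul_eq_mul, ZMod.natCast_zmod_val, inv_mul_cancel_right₀ hr] at this
  have := congrFun (congrArg Subtype.val (show i +ᵥ w = w from hi_mem)) 0
  rwa [vadd_apply, zero_add] at this

def fixedByEquivLoops {p : ℕ} [Fact p.Prime] {r : ZMod p} (hr : r ≠ 0) :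
    AddAction.fixedBy (ClosedWalk s t p) r ≃ {e : E // t e = s e} where
  toFun w := ⟨w.1.1 0, by
    simpa only [apply_eq_apply_zero_of_vadd_eq_self hr w.2] using w.1.2 0⟩
  invFun e := ⟨⟨fun _ => e.1, fun _ => e.2⟩, rfl⟩
  left_inv w := Subtype.ext <| Subtype.ext <| funext fun i =>
    (apply_eq_apply_zero_of_vadd_eq_self hr w.2 i).symm
  right_inv _ := rfl

end ClosedWalk

theorem cyc_eq_card_orbitRel_quotient (k : ℕ) :
    cyc s t k = Nat.card (AddAction.orbitRel.Quotient (ZMod k) (ClosedWalk s t k)) :=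
  Nat.card_congr <| Quot.congrRight ClosedWalk.rotRel_iff_orbitRel

theorem prime_mul_cyc [Finite E] (p : ℕ) [Fact p.Prime] :
    p * cyc s t p = Nat.card (ClosedWalk s t p) + (p - 1) * Nat.card {e : E // t e = s e} := by
  classical
  have burnside := Nat.card_congr
    (AddAction.sigmaFixedByEquivOrbitsProdAddGroup (ZMod p) (ClosedWalk s t p))
  rw [Nat.card_sigma, Nat.card_prod, Nat.card_zmod, ← cyc_eq_card_orbitRel_quotient,
    ← add_sum_erase _ _ (mem_univ 0), AddAction.fixedBy_zero_eq_univ, Nat.card_univ,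
    sum_congr rfl fun r hr => Nat.card_congr (ClosedWalk.fixedByEquivLoops (ne_of_mem_erase hr)),
    sum_const, card_erase_of_mem (mem_univ 0), card_univ, ZMod.card, smul_eq_mul] at burnside
  rw [mul_comm, burnside]

def closedWalkThreeEquiv : ClosedWalk s t 3 ≃
    {p : E × E × E // t p.1 = s p.2.1 ∧ t p.2.1 = s p.2.2 ∧ t p.2.2 = s p.1} :=
  Equiv.subtypeEquiv
    { toFun w := (w 0, w 1, w 2)
      invFun p := ![p.1, p.2.1, p.2.2]
      left_inv w := by funext i; fin_cases i <;> rfl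
      right_inv _ := rfl }
    fun _ => ⟨fun h => ⟨h 0, h 1, h 2⟩, fun ⟨_, _, _⟩ i => by fin_cases i <;> assumption⟩

variable [Fintype E] [DecidableEq V]

theorem card_loops_eq_trace_adjMat [Fintype V] :
    Nat.card {e : E // t e = s e} = (adjMat s t).trace := by
  rw [Nat.card_eq_fintype_card, Fintype.card_subtype,
    card_eq_sum_card_fiberwise (f := s) (t := univ) (fun e _ => mem_univ (s e))]
  refine sum_congr rfl fun i _ => congrArg card ?_
  rw [filter_filter]
  exact filter_congr fun e _ => by constructor <;> rintro ⟨h₁, h₂⟩ <;> subst h₂ <;> simp_all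

theorem card_chain_fiber (i j k : V) :
    #{p : E × E × E | (t p.1 = s p.2.1 ∧ t p.2.1 = s p.2.2 ∧ t p.2.2 = s p.1) ∧
      (s p.1, s p.2.1, s p.2.2) = (i, j, k)} =
      adjMat s t i j * adjMat s t j k * adjMat s t k i := by
  rw [mul_assoc]
  simp only [adjMat, ← card_product]
  refine congrArg card <| ext fun ⟨a, b, c⟩ => ?_
  simp only [mem_filter, mem_univ, true_and, mem_product, Prod.mk.injEq]
  grind

theorem card_closedWalk_three_eq_trace_adjMat_pow [Fintype V] :
    Nat.card (ClosedWalk s t 3) = (adjMat s t ^ 3).trace := by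
  rw [Nat.card_congr (closedWalkThreeEquiv s t), Nat.card_eq_fintype_card, Fintype.card_subtype,
    card_eq_sum_card_fiberwise (f := fun p : E × E × E => (s p.1, s p.2.1, s p.2.2)) (t := univ)
      (fun _ _ => mem_univ _), Matrix.trace_pow_three]
  simp only [filter_filter, Fintype.sum_prod_type, card_chain_fiber]

end

/-- the number of 3-cycles (orbits of the rotation action of
`ZMod 3` on closed walks of length 3) satisfies `3·c₃(g) = Tr(A³) + 2·Tr(A)`,
i.e. `c₃(g) = ⅓·Tr(A³ + 2A)`. -/
theorem three_mul_c3_eq_trace {V E : Type*} [Fintype V] [Fintype E]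
    [DecidableEq V] (s t : E → V) :
    3 * cyc s t 3 =
      Matrix.trace ((adjMat s t) ^ 3) + 2 * Matrix.trace (adjMat s t) := by
  have : Fact (Nat.Prime 3) := ⟨Nat.prime_three⟩
  rw [prime_mul_cyc, card_closedWalk_three_eq_trace_adjMat_pow, card_loops_eq_trace_adjMat]
end

section
/- Let σ be the permutation of {1,2,3}×{1,2,3} sending 11↦23, 12↦31, 13↦12, 21↦32, 22↦13, 23↦21, 31↦11, 32↦22, 33↦33, and let η be the permutation sending 11↦32, 12↦11, 13↦12, 21↦33, 22↦22, 23↦13, 31↦23, 32↦21, 33↦31. Then A_σ is the 3×3 all-ones matrix, A_η is the matrix with rows (0,1,2), (1,2,0), (2,0,1), and A_σ and A_η are not permutation-conjugate; indeed Tr(A_σ² + A_σ) = 12 while Tr(A_η² + A_η) = 18. -/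
lemma permMat_eq_permMatrixHom {n : Type*} [Fintype n] [DecidableEq n] (σ : Equiv.Perm n) :
    permMat σ = Matrix.permMatrixHom (R := ℕ) σ := by
  ext i j
  simp [permMat, PEquiv.toMatrix_apply, Equiv.eq_symm_apply, eq_comm]

theorem PermConj.trace_pow_eq {n : Type*} [Fintype n] [DecidableEq n] {A B : Matrix n n ℕ}
    (h : PermConj A B) (k : ℕ) : (A ^ k).trace = (B ^ k).trace := by
  obtain ⟨σ, hσ⟩ := h
  set u := (Matrix.permMatrixHom (R := ℕ)).toHomUnits σ
  have hu : (u : Matrix n n ℕ) = permMat σ := (permMat_eq_permMatrixHom σ).symm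
  have hB : B = u * A * (↑u⁻¹ : Matrix n n ℕ) := by
    rw [hu, hσ, mul_assoc, ← hu, Units.mul_inv, mul_one]
  rw [hB, Units.conj_pow, Matrix.trace_units_conj]

theorem PermConj.trace_sq_add_self_eq {n : Type*} [Fintype n] [DecidableEq n]
    {A B : Matrix n n ℕ} (h : PermConj A B) : (A ^ 2 + A).trace = (B ^ 2 + B).trace := by
  simpa only [Matrix.trace_add, pow_one] using
    congrArg₂ (· + ·) (h.trace_pow_eq 2) (h.trace_pow_eq 1)

/-- In the count defining `Amat σ j k`, the column `m` is forced to be `(σ (n, k)).2`. -/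
lemma Amat_apply (σ : Equiv.Perm (Fin 3 × Fin 3)) (j k : Fin 3) :
    Amat σ j k = ∑ n, if (σ (n, k)).1 = j then 1 else 0 := by
  simp only [Amat, Finset.card_filter, Fintype.sum_prod_type, Prod.ext_iff]
  refine Finset.sum_congr rfl fun n _ => ?_
  simp [ite_and, eq_comm]

/-- for the permutations σ (11↦23, 12↦31, 13↦12, 21↦32, 22↦13,
23↦21, 31↦11, 32↦22, 33↦33) and η (11↦32, 12↦11, 13↦12, 21↦33, 22↦22, 23↦13,
31↦23, 32↦21, 33↦31) of `{1,2,3}×{1,2,3}` (written here 0-based), `A_σ` is the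
all-ones matrix, `A_η = !![0,1,2; 1,2,0; 2,0,1]`, and they are not
permutation-conjugate; indeed `Tr(A_σ² + A_σ) = 12` while `Tr(A_η² + A_η) = 18`. -/
theorem example_sigma_eta (σ η : Equiv.Perm (Fin 3 × Fin 3))
    (hσ1 : σ (0, 0) = (1, 2)) (hσ2 : σ (0, 1) = (2, 0)) (hσ3 : σ (0, 2) = (0, 1))
    (hσ4 : σ (1, 0) = (2, 1)) (hσ5 : σ (1, 1) = (0, 2)) (hσ6 : σ (1, 2) = (1, 0))
    (hσ7 : σ (2, 0) = (0, 0)) (hσ8 : σ (2, 1) = (1, 1)) (hσ9 : σ (2, 2) = (2, 2))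
    (hη1 : η (0, 0) = (2, 1)) (hη2 : η (0, 1) = (0, 0)) (hη3 : η (0, 2) = (0, 1))
    (hη4 : η (1, 0) = (2, 2)) (hη5 : η (1, 1) = (1, 1)) (hη6 : η (1, 2) = (0, 2))
    (hη7 : η (2, 0) = (1, 2)) (hη8 : η (2, 1) = (1, 0)) (hη9 : η (2, 2) = (2, 0)) :
    Amat σ = !![1, 1, 1; 1, 1, 1; 1, 1, 1] ∧
    Amat η = !![0, 1, 2; 1, 2, 0; 2, 0, 1] ∧
    ¬ PermConj (Amat σ) (Amat η) ∧
    Matrix.trace ((Amat σ) ^ 2 + Amat σ) = 12 ∧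
    Matrix.trace ((Amat η) ^ 2 + Amat η) = 18 := by
  have hAσ : Amat σ = !![1, 1, 1; 1, 1, 1; 1, 1, 1] := by
    ext j k
    fin_cases j <;> fin_cases k <;>
      simp only [Amat_apply, Fin.sum_univ_three, Fin.reduceFinMk,
        hσ1, hσ2, hσ3, hσ4, hσ5, hσ6, hσ7, hσ8, hσ9] <;>
      decide
  have hAη : Amat η = !![0, 1, 2; 1, 2, 0; 2, 0, 1] := by
    ext j k
    fin_cases j <;> fin_cases k <;>
      simp only [Amat_apply, Fin.sum_univ_three, Fin.reduceFinMk,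
        hη1, hη2, hη3, hη4, hη5, hη6, hη7, hη8, hη9] <;>
      decide
  have hσ_trace : ((Amat σ) ^ 2 + Amat σ).trace = 12 := by rw [hAσ]; decide
  have hη_trace : ((Amat η) ^ 2 + Amat η).trace = 18 := by rw [hAη]; decide
  refine ⟨hAσ, hAη, fun hconj => ?_, hσ_trace, hη_trace⟩
  have htrace := hconj.trace_sq_add_self_eq
  omega
end

section
/- There exist 4×4 matrices A and B with natural-number entries, all of whose row sums and column sums equal 2, such that the directed multigraphs g_A and g_B with adjacency matrices A and B satisfy c₁(g_A) = c₁(g_B) and c₂(g_A) = c₂(g_B), yet A and B are not permutation-conjugate. (For example, one may take A with c₁ = 2, c₂ = 3, c₃ = 12 of type (2,0,0,0)b and B with c₁ = 2, c₂ = 3, c₃ = 4 of type (1,1,0,0)e.) -/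
/-- The edge set of the canonical directed multigraph with adjacency matrix `A`:
`A i j` parallel edges from `i` to `j`. -/
def MatEdge {n : ℕ} (A : Matrix (Fin n) (Fin n) ℕ) : Type :=
  (i : Fin n) × (j : Fin n) × Fin (A i j)

instance {n : ℕ} (A : Matrix (Fin n) (Fin n) ℕ) : Fintype (MatEdge A) := by
  unfold MatEdge
  haveI : ∀ i : Fin n, Fintype ((j : Fin n) × Fin (A i j)) := fun i => inferInstance
  infer_instance

/-- Source map of the canonical multigraph of `A`. -/
def matSrc {n : ℕ} (A : Matrix (Fin n) (Fin n) ℕ) : MatEdge A → Fin n :=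
  fun e => e.1

/-- Target map of the canonical multigraph of `A`. -/
def matTgt {n : ℕ} (A : Matrix (Fin n) (Fin n) ℕ) : MatEdge A → Fin n :=
  fun e => e.2.1

/-!
Burnside's lemma for the rotation action of `ZMod k` on closed walks expresses `c_k` through
walks fixed by rotations. The walks fixed by the one-step rotation are the constant walks at
loops, so `c₁ = tr A` and `2 c₂ = tr A² + tr A`. Both witnesses have `tr = 2` and `tr A² = 4`.
Permutation conjugation permutes the diagonal entries, and the first witness has a diagonal
entry `2` while the second has none.
-/

open Matrix AddAction

section ClosedWalks

variable {V E : Type*} {s t : E → V} {k : ℕ}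

instance : AddAction (ZMod k) {e : ZMod k → E // IsClosedWalk s t k e} where
  vadd r w := ⟨fun i => w.1 (i + r), fun i => by simpa only [add_right_comm] using w.2 (i + r)⟩
  zero_vadd w := Subtype.ext <| funext fun i => congrArg w.1 (add_zero i)
  add_vadd r r' w := Subtype.ext <| funext fun i => congrArg w.1 (add_assoc i r r').symm

theorem vadd_closedWalk_apply (r i : ZMod k) (w : {e : ZMod k → E // IsClosedWalk s t k e}) :
    (r +ᵥ w).1 i = w.1 (i + r) := rfl

theorem rotRel_eq_orbitRel :
    RotRel s t k = orbitRel (ZMod k) {e : ZMod k → E // IsClosedWalk s t k e} := by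
  ext w₁ w₂
  rw [orbitRel_apply, mem_orbit_iff]
  constructor
  · rintro ⟨r, h⟩
    exact ⟨-r, Subtype.ext <| funext fun i => by simp [vadd_closedWalk_apply, ← h]⟩
  · rintro ⟨r, rfl⟩
    exact ⟨-r, fun i => by simp [vadd_closedWalk_apply]⟩

theorem cyc_eq_card_orbits :
    cyc s t k = Nat.card (orbitRel.Quotient (ZMod k) {e : ZMod k → E // IsClosedWalk s t k e}) := by
  rw [cyc, rotRel_eq_orbitRel]; rfl

theorem cyc_mul_eq_sum_card_fixedBy [NeZero k] [Finite E] :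
    cyc s t k * k =
      ∑ r : ZMod k, Nat.card (fixedBy {e : ZMod k → E // IsClosedWalk s t k e} r) := by
  have burnside := Nat.card_congr
    (sigmaFixedByEquivOrbitsProdAddGroup (ZMod k) {e : ZMod k → E // IsClosedWalk s t k e})
  rwa [Nat.card_sigma, Nat.card_prod, Nat.card_zmod, ← cyc_eq_card_orbits, eq_comm] at burnside

theorem apply_eq_apply_zero_of_mem_fixedBy_one [NeZero k]
    {w : {e : ZMod k → E // IsClosedWalk s t k e}} (hw : w ∈ fixedBy _ (1 : ZMod k))
    (i : ZMod k) : w.1 i = w.1 0 := by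
  have step (j : ZMod k) : w.1 (j + 1) = w.1 j := congrFun (congrArg Subtype.val hw) j
  rw [← ZMod.natCast_zmod_val i]
  induction i.val with
  | zero => rw [Nat.cast_zero]
  | succ n ih => rw [Nat.cast_succ, step, ih]

def fixedByOneEquivLoops [NeZero k] :
    fixedBy {e : ZMod k → E // IsClosedWalk s t k e} (1 : ZMod k) ≃ {e : E // t e = s e} where
  toFun w := ⟨w.1.1 0, by
    simpa only [zero_add, apply_eq_apply_zero_of_mem_fixedBy_one w.2] using w.1.2 0⟩
  invFun e := ⟨⟨fun _ => e.1, fun _ => e.2⟩, rfl⟩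
  left_inv w := Subtype.ext <| Subtype.ext <| funext fun i =>
    (apply_eq_apply_zero_of_mem_fixedBy_one w.2 i).symm
  right_inv _ := rfl

def closedWalkTwoEquiv :
    {e : ZMod 2 → E // IsClosedWalk s t 2 e} ≃ {p : E × E // t p.1 = s p.2 ∧ t p.2 = s p.1} where
  toFun w := ⟨(w.1 0, w.1 1), w.2 0, w.2 1⟩
  invFun p := ⟨![p.1.1, p.1.2], by
    intro i; fin_cases i
    exacts [p.2.1, p.2.2]⟩
  left_inv w := Subtype.ext <| funext fun i => by fin_cases i <;> rfl
  right_inv _ := rfl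

end ClosedWalks

section Counting

variable {V E : Type*} [Fintype V] [DecidableEq V] [Fintype E] (s t : E → V)

theorem card_loops_eq_trace : Nat.card {e : E // t e = s e} = (adjMat s t).trace := by
  classical
  rw [Nat.card_eq_fintype_card, Fintype.card_subtype,
    Finset.card_eq_sum_card_fiberwise (f := s) (t := Finset.univ) (fun _ _ => Finset.mem_univ _)]
  refine Finset.sum_congr rfl fun i _ => ?_
  rw [Finset.filter_filter]
  exact congrArg Finset.card (Finset.filter_congr fun e _ => by grind)

theorem card_closedPairs_eq_trace_sq :
    Nat.card {p : E × E // t p.1 = s p.2 ∧ t p.2 = s p.1} = (adjMat s t ^ 2).trace := by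
  classical
  rw [Nat.card_eq_fintype_card, Fintype.card_subtype,
    Finset.card_eq_sum_card_fiberwise (f := fun p => (s p.1, t p.1)) (t := Finset.univ)
      (fun _ _ => Finset.mem_univ _), Fintype.sum_prod_type]
  simp only [trace, diag, pow_two, mul_apply]
  refine Finset.sum_congr rfl fun i _ => Finset.sum_congr rfl fun j _ => ?_
  rw [adjMat, adjMat, ← Finset.card_product, Finset.filter_filter, ← Finset.filter_product,
    Finset.univ_product_univ]
  exact congrArg Finset.card (Finset.filter_congr fun p _ => by grind)

theorem cyc_one_eq_trace : cyc s t 1 = (adjMat s t).trace := by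
  rw [← mul_one (cyc s t 1), cyc_mul_eq_sum_card_fixedBy, Fintype.sum_subsingleton _ 1,
    Nat.card_congr fixedByOneEquivLoops, card_loops_eq_trace]

theorem cyc_two_mul_two : cyc s t 2 * 2 = (adjMat s t ^ 2).trace + (adjMat s t).trace := by
  rw [cyc_mul_eq_sum_card_fixedBy,
    Fintype.sum_eq_add 0 1 (by decide) (fun r hr => absurd hr (by revert r; decide)),
    fixedBy_zero_eq_univ, Nat.card_univ, Nat.card_congr closedWalkTwoEquiv, card_closedPairs_eq_trace_sq,
    Nat.card_congr fixedByOneEquivLoops, card_loops_eq_trace]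

end Counting

theorem adjMat_matSrc_matTgt {n : ℕ} (A : Matrix (Fin n) (Fin n) ℕ) :
    adjMat (matSrc A) (matTgt A) = A := by
  ext i j
  -- Instance search cannot find the inner `Fintype` of the nested sigma type `MatEdge A` unaided.
  let fintypeRow (i' : Fin n) : Fintype ((j' : Fin n) × Fin (A i' j')) := inferInstance
  have key : (Finset.univ.filter fun e : (i' : Fin n) × (j' : Fin n) × Fin (A i' j') =>
      e.1 = i ∧ e.2.1 = j).card = A i j := by
    simp only [Finset.card_filter, Fintype.sum_sigma, ite_and]
    rw [Fintype.sum_eq_single i (fun x hx => by simp [hx]),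
      Fintype.sum_eq_single j (fun x hx => by simp [hx])]
    simp
  exact key

theorem PermConj.exists_apply_eq {n : Type*} [Fintype n] [DecidableEq n] {A B : Matrix n n ℕ}
    (h : PermConj A B) : ∃ σ : Equiv.Perm n, ∀ i j, B (σ i) (σ j) = A i j := by
  obtain ⟨σ, hσ⟩ := h
  refine ⟨σ, fun i j => ?_⟩
  have := congrFun (congrFun hσ (σ i)) j
  simpa [permMat, mul_apply] using this.symm

/-- there exist 4×4 ℕ-matrices `A`, `B` with all row and column
sums equal to 2 whose directed multigraphs have the same numbers of 1-cycles
and of 2-cycles, yet `A` and `B` are not permutation-conjugate. -/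
theorem exists_same_c1_c2_not_permConj :
    ∃ A B : Matrix (Fin 4) (Fin 4) ℕ,
      (∀ i, (∑ j, A i j = 2) ∧ (∑ j, A j i = 2)) ∧
      (∀ i, (∑ j, B i j = 2) ∧ (∑ j, B j i = 2)) ∧
      cyc (matSrc A) (matTgt A) 1 = cyc (matSrc B) (matTgt B) 1 ∧
      cyc (matSrc A) (matTgt A) 2 = cyc (matSrc B) (matTgt B) 2 ∧
      ¬ PermConj A B := by
  refine ⟨!![0,0,0,2; 0,2,0,0; 2,0,0,0; 0,0,2,0], !![0,0,1,1; 1,1,0,0; 0,0,1,1; 1,1,0,0],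
    by decide, by decide, ?_, ?_, ?_⟩
  · rw [cyc_one_eq_trace, cyc_one_eq_trace, adjMat_matSrc_matTgt, adjMat_matSrc_matTgt]
    decide
  · refine Nat.eq_of_mul_eq_mul_right two_pos ?_
    rw [cyc_two_mul_two, cyc_two_mul_two, adjMat_matSrc_matTgt, adjMat_matSrc_matTgt]
    decide
  · intro hAB
    obtain ⟨σ, hσ⟩ := hAB.exists_apply_eq
    exact (by decide : ∀ i, !![0,0,1,1; 1,1,0,0; 0,0,1,1; 1,1,0,0] i i ≠ 2) (σ 1) (hσ 1 1)
end
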